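/- arXiv:1908.03604 — 2 statements merged into one kernel-verified Lean document; each statement's English description precedes it below -/
import Mathlib

section
/- Let (a_m)_{m≥1} be complex numbers with ∑_{m≥1} |a_m| < ∞, and define the Dirichlet series g(s) = ∑_{m≥1} a_m · m^{−s}, which converges absolutely for every s ∈ ℂ with Re s ≥ 0. Then for every s ∈ ℂ with Re s > 0, the Newton series ∑_{n=0}^∞ (∑_{k=0}^n P_k(n)·g(k))·P_n(s) converges and its sum equals g(s). -/
open Filter Finset Topology

/-- The `n`-th Pochhammer–Newton polynomial `P_n(α) = ((-1)^n / n!) ∏_{m=0}^{n-1} (α - m)`. -/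
noncomputable def pochNewton (n : ℕ) (α : ℂ) : ℂ :=
  ((-1 : ℂ) ^ n / (n.factorial : ℂ)) * ∏ m ∈ Finset.range n, (α - (m : ℂ))

lemma pochNewton_zero (α : ℂ) : pochNewton 0 α = 1 := by
  simp [pochNewton]

lemma pochNewton_succ (n : ℕ) (α : ℂ) :
    pochNewton (n + 1) α = (((n : ℂ) - α) / (n + 1)) * pochNewton n α := by
  have hn : ((n.factorial : ℂ)) ≠ 0 := Nat.cast_ne_zero.2 n.factorial_ne_zero
  have hn1 : ((n : ℂ) + 1) ≠ 0 := by
    exact_mod_cast (Nat.cast_add_one_ne_zero n : ((n:ℂ)+1) ≠ 0)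
  simp only [pochNewton, Finset.prod_range_succ, Nat.factorial_succ, Nat.cast_mul, pow_succ]
  push_cast
  field_simp
  ring

lemma pochNewton_nat (k n : ℕ) (hk : k ≤ n) :
    pochNewton k (n : ℂ) = (-1 : ℂ) ^ k * (n.choose k : ℂ) := by
  induction k with
  | zero => simp [pochNewton]
  | succ k ih =>
      have hk' : k ≤ n := Nat.le_of_succ_le hk
      rw [pochNewton_succ, ih hk']
      have hc : (n.choose (k+1) : ℂ) * (k+1) = (n.choose k : ℂ) * ((n:ℂ) - k) := by
        have h1 := Nat.choose_succ_right_eq n k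
        have h2 : ((n - k : ℕ) : ℂ) = (n:ℂ) - k := by
          push_cast [Nat.cast_sub hk']; ring
        calc (n.choose (k+1) : ℂ) * (k+1) = ((n.choose (k+1) * (k+1) : ℕ) : ℂ) := by push_cast; ring
        _ = ((n.choose k * (n - k) : ℕ) : ℂ) := by rw [h1]
        _ = (n.choose k : ℂ) * ((n:ℂ) - k) := by push_cast [Nat.cast_sub hk']; ring
      have hk1 : ((k : ℂ) + 1) ≠ 0 := by exact_mod_cast (Nat.cast_add_one_ne_zero k : ((k:ℂ)+1) ≠ 0)
      push_cast
      field_simp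
      linear_combination (-1:ℂ)^k * hc

lemma pochNewton_prod_eq (n : ℕ) (s : ℂ) :
    ∏ j ∈ Finset.range n, (-s + (j : ℂ)) = (n.factorial : ℂ) * pochNewton n s := by
  have h : ∏ j ∈ Finset.range n, (-s + (j : ℂ)) =
      ∏ j ∈ Finset.range n, ((-1 : ℂ) * (s - (j : ℂ))) :=
    Finset.prod_congr rfl fun j _ => by ring
  rw [h, Finset.prod_mul_distrib, Finset.prod_const, pochNewton]
  have hn : ((n.factorial : ℂ)) ≠ 0 := Nat.cast_ne_zero.2 n.factorial_ne_zero
  field_simp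
  rw [Finset.card_range]; ring

lemma pochNewton_ne_zero {s : ℂ} (hs : ∀ k : ℕ, s ≠ (k : ℂ)) (n : ℕ) :
    pochNewton n s ≠ 0 := by
  rw [pochNewton]
  apply mul_ne_zero
  · exact div_ne_zero (pow_ne_zero _ (by norm_num)) (Nat.cast_ne_zero.2 n.factorial_ne_zero)
  · exact Finset.prod_ne_zero_iff.2 fun m _ => sub_ne_zero.2 (hs m)

lemma pochNewton_norm_summable {s : ℂ} (hs : 0 < s.re) :
    Summable fun n => ‖pochNewton n s‖ := by
  by_cases hnat : ∃ k : ℕ, s = (k : ℂ)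
  · obtain ⟨k, rfl⟩ := hnat
    apply summable_of_ne_finset_zero (s := Finset.range (k + 1))
    intro n hn
    rw [Finset.mem_range, not_lt] at hn
    have hk : k ∈ Finset.range n := Finset.mem_range.2 (by omega)
    have hz : pochNewton n (k : ℂ) = 0 := by
      rw [pochNewton, Finset.prod_eq_zero hk (sub_self (k:ℂ)), mul_zero]
    simp [hz]
  · push_neg at hnat
    set t : ℂ := -s with ht
    have hG : Complex.Gamma t ≠ 0 := by
      apply Complex.Gamma_ne_zero
      intro m h
      exact hnat m (by rw [ht] at h; have := neg_injective h; simpa using this.symm ▸ rfl)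
    have hGS := (Complex.GammaSeq_tendsto_Gamma t).norm
    set G : ℝ := ‖Complex.Gamma t‖ with hGdef
    have hGpos : 0 < G := norm_pos_iff.2 hG
    -- key identity
    have key : ∀ n : ℕ, 1 ≤ n →
        ‖pochNewton n s‖ * (‖Complex.GammaSeq t n‖ * ‖t + n‖) = (n : ℝ) ^ (t.re) := by
      intro n hn
      have hP := pochNewton_ne_zero hnat n
      have htn : t + n ≠ 0 := by
        intro h
        exact hnat n (by rw [ht] at h; linear_combination -h)
      have hfact : ((n.factorial : ℂ)) ≠ 0 := Nat.cast_ne_zero.2 n.factorial_ne_zero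
      have hprod : ∏ j ∈ Finset.range (n + 1), (t + (j : ℂ)) =
          (n.factorial : ℂ) * pochNewton n s * (t + n) := by
        rw [Finset.prod_range_succ, ht, pochNewton_prod_eq]
      have hGSeq : Complex.GammaSeq t n * (pochNewton n s * (t + n)) = (n : ℂ) ^ t := by
        rw [Complex.GammaSeq, hprod]
        field_simp
      have := congrArg norm hGSeq
      rw [norm_mul, norm_mul] at this
      have hcpow : ‖(n : ℂ) ^ t‖ = (n : ℝ) ^ t.re := by
        rw [show ((n:ℕ):ℂ) = ((n:ℝ):ℂ) by push_cast; ring,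
          Complex.norm_cpow_eq_rpow_re_of_pos (by exact_mod_cast hn)]
      rw [hcpow] at this
      linarith [this]
    have hbound : ∀ᶠ n : ℕ in atTop,
        ‖pochNewton n s‖ ≤ (4 / G) * ((n : ℝ) ^ (1 + s.re))⁻¹ := by
      have h1 : ∀ᶠ n : ℕ in atTop, G / 2 ≤ ‖Complex.GammaSeq t n‖ :=
        hGS.eventually (eventually_ge_nhds (by linarith))
      have h2 : ∀ᶠ n : ℕ in atTop, (n : ℝ) / 2 ≤ ‖t + n‖ := by
        filter_upwards [eventually_ge_atTop ⌈2 * ‖t‖⌉₊] with n hn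
        have hc : 2 * ‖t‖ ≤ (n : ℝ) :=
          (Nat.le_ceil _).trans (by exact_mod_cast hn)
        have h4 : ‖((n:ℕ) : ℂ)‖ ≤ ‖t + n‖ + ‖t‖ := by
          calc ‖((n:ℕ) : ℂ)‖ = ‖(t + n) + (-t)‖ := by congr 1; ring
            _ ≤ ‖t + n‖ + ‖-t‖ := norm_add_le _ _
            _ = ‖t + n‖ + ‖t‖ := by rw [norm_neg]
        have h5 : ‖((n:ℕ) : ℂ)‖ = (n : ℝ) := by
          simp
        linarith [h4, h5 ▸ h4]
      filter_upwards [h1, h2, eventually_ge_atTop 1] with n h1 h2 h3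
      have hn1 : (1:ℝ) ≤ (n:ℝ) := by exact_mod_cast h3
      have hnpos : (0:ℝ) < n := by linarith
      have hkey := key n h3
      have htre : t.re = -s.re := by simp [ht]
      rw [htre] at hkey
      have hD : G / 2 * ((n:ℝ) / 2) ≤ ‖Complex.GammaSeq t n‖ * ‖t + n‖ :=
        mul_le_mul h1 h2 (by positivity) (norm_nonneg _)
      have hle : ‖pochNewton n s‖ * (G / 2 * ((n:ℝ)/2)) ≤ (n:ℝ) ^ (-s.re) := by
        calc ‖pochNewton n s‖ * (G/2 * ((n:ℝ)/2))
            ≤ ‖pochNewton n s‖ * (‖Complex.GammaSeq t n‖ * ‖t + n‖) :=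
              mul_le_mul_of_nonneg_left hD (norm_nonneg _)
          _ = (n:ℝ) ^ (-s.re) := hkey
      have hpos : 0 < G / 2 * ((n:ℝ)/2) := by positivity
      rw [← le_div_iff₀ hpos] at hle
      refine hle.trans (le_of_eq ?_)
      have hsplit : (n:ℝ) ^ (1 + s.re) = (n:ℝ) * (n:ℝ) ^ s.re := by
        rw [Real.rpow_add hnpos, Real.rpow_one]
      rw [Real.rpow_neg hnpos.le, hsplit]
      have hσpos : (0:ℝ) < (n:ℝ) ^ s.re := Real.rpow_pos_of_pos hnpos _
      field_simp
      ring
    apply Summable.of_norm_bounded_eventually_nat (g := fun n => (4 / G) * ((n : ℝ) ^ (1 + s.re))⁻¹)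
      ((Real.summable_nat_rpow_inv.2 (by linarith)).mul_left _)
    filter_upwards [hbound] with n hn
    simpa using hn

lemma pochNewton_succ_mul (n : ℕ) (s : ℂ) :
    ((n : ℂ) + 1) * pochNewton (n + 1) s = ((n : ℂ) - s) * pochNewton n s := by
  rw [pochNewton_succ]
  have h : ((n : ℂ) + 1) ≠ 0 := Nat.cast_add_one_ne_zero n
  field_simp

lemma pochNewton_hasSum {s : ℂ} (hs : 0 < s.re) {x : ℝ} (hx0 : 0 ≤ x) (hx1 : x < 1) :
    HasSum (fun n => pochNewton n s * (x : ℂ) ^ n) ((1 - (x : ℂ)) ^ s) := by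
  have hP := pochNewton_norm_summable hs
  set M : ℝ := ∑' n, ‖pochNewton n s‖ with hM
  have hMle : ∀ n, ‖pochNewton n s‖ ≤ M := fun n => Summable.le_tsum hP n fun _ _ => norm_nonneg _
  set r : ℝ := (1 + x) / 2 with hr
  have hr0 : 0 < r := by rw [hr]; linarith
  have hr1 : r < 1 := by rw [hr]; linarith
  have hxr : x < r := by rw [hr]; linarith
  -- summability of the series at any point of norm ≤ 1
  have hsum : ∀ y : ℝ, |y| ≤ 1 → Summable fun n => pochNewton n s * (y : ℂ) ^ n := by
    intro y hy
    apply Summable.of_norm_bounded hP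
    intro n
    rw [norm_mul, norm_pow]
    have : ‖(y : ℂ)‖ ≤ 1 := by rwa [Complex.norm_real, Real.norm_eq_abs]
    calc ‖pochNewton n s‖ * ‖(y:ℂ)‖ ^ n ≤ ‖pochNewton n s‖ * 1 ^ n := by
          gcongr
      _ = ‖pochNewton n s‖ := by simp
  -- the derivative bound
  set u : ℕ → ℝ := fun n => M * n * r ^ (n - 1) with hu
  have hu_sum : Summable u := by
    rw [← summable_nat_add_iff 1]
    have : (fun n => u (n + 1)) = fun n : ℕ => M * ((n:ℝ) * r ^ n) + M * r ^ n := by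
      funext n
      simp only [hu, Nat.add_sub_cancel]
      push_cast
      ring
    rw [this]
    have h1 : Summable fun n : ℕ => (n : ℝ) * r ^ n := by
      have := summable_pow_mul_geometric_of_norm_lt_one 1
        (show ‖r‖ < 1 by rwa [Real.norm_eq_abs, abs_of_pos hr0])
      simpa using this
    exact ((h1.mul_left M).add ((summable_geometric_of_lt_one hr0.le hr1).mul_left M))
  -- derivative of each summand
  have hderiv : ∀ n : ℕ, ∀ y : ℝ,
      HasDerivAt (fun y : ℝ => pochNewton n s * (y : ℂ) ^ n)
        (pochNewton n s * (n * (y : ℂ) ^ (n - 1))) y := by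
    intro n y
    exact (((hasDerivAt_pow n (y : ℂ)).const_mul (pochNewton n s))).comp_ofReal
  have hbound : ∀ n : ℕ, ∀ y : ℝ, y ∈ Set.Ioo (-r) r →
      ‖pochNewton n s * (n * (y : ℂ) ^ (n - 1))‖ ≤ u n := by
    intro n y hy
    have hyr : |y| ≤ r := by
      rw [abs_le]; exact ⟨hy.1.le, hy.2.le⟩
    rw [norm_mul, norm_mul, norm_pow, Complex.norm_real, Real.norm_eq_abs,
      Complex.norm_natCast]
    have hM0 : 0 ≤ M := tsum_nonneg fun n => norm_nonneg _
    calc ‖pochNewton n s‖ * ((n : ℝ) * |y| ^ (n - 1)) ≤ M * ((n:ℝ) * r ^ (n-1)) := by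
          gcongr <;> first | exact hMle n | exact hyr | exact abs_nonneg y
      _ = u n := by rw [hu]; ring
  have hF : ∀ y : ℝ, y ∈ Set.Ioo (-r) r →
      HasDerivAt (fun z : ℝ => ∑' n, pochNewton n s * (z : ℂ) ^ n)
        (∑' n, pochNewton n s * (n * (y : ℂ) ^ (n - 1))) y := by
    intro y hy
    exact hasDerivAt_tsum_of_isPreconnected hu_sum isOpen_Ioo
      (convex_Ioo _ _).isPreconnected (fun n z _ => hderiv n z) hbound
      (Set.mem_Ioo.2 ⟨by linarith, by linarith⟩)
      (hsum 0 (by norm_num)) hy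
  set F : ℝ → ℂ := fun z => ∑' n, pochNewton n s * (z : ℂ) ^ n with hFdef
  set D : ℝ → ℂ := fun y => ∑' n, pochNewton n s * (n * (y : ℂ) ^ (n - 1)) with hDdef
  -- derivative summability at points
  have hDsum : ∀ y : ℝ, y ∈ Set.Ioo (-r) r →
      Summable fun n => pochNewton n s * ((n : ℂ) * (y : ℂ) ^ (n - 1)) := by
    intro y hy
    exact Summable.of_norm_bounded hu_sum (fun n => hbound n y hy)
  -- the ODE
  have hODE : ∀ y : ℝ, y ∈ Set.Ioo (-r) r → (1 - (y : ℂ)) * D y = -s * F y := by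
    intro y hy
    have hyabs : |y| ≤ 1 := by
      rw [abs_le]
      constructor <;> [linarith [hy.1]; linarith [hy.2]]
    have hsum1 := hsum y hyabs
    have hsum2 := hDsum y hy
    -- y * D y = ∑' n, pochNewton n s * (n * y ^ n)
    have hyD : (y : ℂ) * D y = ∑' n, pochNewton n s * ((n : ℂ) * (y : ℂ) ^ n) := by
      rw [hDdef, ← tsum_mul_left]
      apply tsum_congr
      intro n
      cases n with
      | zero => simp
      | succ n => simp only [Nat.add_sub_cancel]; push_cast; ring
    -- D y = ∑' n, ((n:ℂ) - s) * pochNewton n s * y ^ n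
    have hD2 : D y = ∑' n : ℕ, (((n : ℂ) - s) * pochNewton n s) * (y : ℂ) ^ n := by
      simp only [hDdef]
      rw [Summable.tsum_eq_zero_add hsum2]
      simp only [Nat.cast_zero, zero_mul, mul_zero, zero_add, Nat.add_sub_cancel]
      apply tsum_congr
      intro n
      push_cast
      rw [← pochNewton_succ_mul]
      ring
    have hsum3 : Summable fun n => pochNewton n s * ((n : ℂ) * (y : ℂ) ^ n) := by
      apply Summable.of_norm_bounded hu_sum
      intro n
      rw [norm_mul, norm_mul, norm_pow, Complex.norm_natCast]
      have h1 : ‖(y:ℂ)‖ ≤ r := by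
        rw [Complex.norm_real, Real.norm_eq_abs, abs_le]
        exact ⟨hy.1.le, hy.2.le⟩
      have h2 : ‖(y:ℂ)‖ ^ n ≤ r ^ (n - 1) := by
        calc ‖(y:ℂ)‖ ^ n ≤ r ^ n := pow_le_pow_left₀ (norm_nonneg _) h1 n
          _ ≤ r ^ (n - 1) := pow_le_pow_of_le_one hr0.le hr1.le (Nat.sub_le n 1)
      have hM0 : 0 ≤ M := tsum_nonneg fun n => norm_nonneg _
      calc ‖pochNewton n s‖ * ((n:ℝ) * ‖(y:ℂ)‖ ^ n) ≤ M * ((n:ℝ) * r ^ (n-1)) := by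
            gcongr ?_ * (?_ * ?_) <;> first | exact hMle n | exact le_refl _ | exact h2
        _ = u n := by rw [hu]; ring
    have hexp : D y = (y : ℂ) * D y - s * F y := by
      rw [hyD, hD2]
      simp only [hFdef]
      rw [← tsum_mul_left (a := s), ← Summable.tsum_sub hsum3 (hsum1.mul_left s)]
      apply tsum_congr
      intro n
      ring
    linear_combination hexp
  -- constancy of H y = F y * (1 - y) ^ (-s) on [0, x]
  set H : ℝ → ℂ := fun y => F y * (1 - (y : ℂ)) ^ (-s) with hHdef
  have hIcc : Set.Icc (0:ℝ) x ⊆ Set.Ioo (-r) r := fun y hy =>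
    Set.mem_Ioo.2 ⟨by linarith [hy.1], by linarith [hy.2]⟩
  have hH : ∀ y ∈ Set.Icc (0:ℝ) x, HasDerivAt H 0 y := by
    intro y hy
    have hyt := hIcc hy
    have hy1 : y < 1 := lt_of_lt_of_le hyt.2 hr1.le
    have hyne : (1 : ℂ) - (y : ℝ) ≠ 0 := by
      intro h
      have : (1 : ℝ) - y = 0 := by
        have := congrArg Complex.re h
        simpa using this
      linarith
    have h0 : (1 : ℂ) - (y : ℝ) ∈ Complex.slitPlane := by
      rw [Complex.mem_slitPlane_iff]
      left
      simp [hy1]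
    have hC : HasDerivAt (fun z : ℂ => (1 - z) ^ (-s))
        (-s * (1 - (y:ℂ)) ^ (-s - 1) * (-1)) (y : ℂ) :=
      HasDerivAt.cpow_const ((hasDerivAt_id (y:ℂ)).const_sub 1) h0
    have hc : HasDerivAt (fun z : ℝ => (1 - (z : ℂ)) ^ (-s))
        (-s * (1 - (y:ℂ)) ^ (-s - 1) * (-1)) y := hC.comp_ofReal
    have hmul := (hF y hyt).mul hc
    have hzero : D y * (1 - (y:ℂ)) ^ (-s) + F y * (-s * (1 - (y:ℂ)) ^ (-s - 1) * (-1)) = 0 := by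
      have hsplit : (1 - (y:ℂ)) ^ (-s - 1) * (1 - (y:ℂ)) = (1 - (y:ℂ)) ^ (-s) := by
        rw [Complex.cpow_sub _ _ hyne, Complex.cpow_one]
        field_simp
      rw [← hsplit]
      have hODEy := hODE y hyt
      linear_combination (1 - (y:ℂ)) ^ (-s - 1) * hODEy
    rw [hHdef]
    have : HasDerivAt (fun y : ℝ => F y * (1 - (y : ℂ)) ^ (-s))
        (D y * (1 - (y:ℂ)) ^ (-s) + F y * (-s * (1 - (y:ℂ)) ^ (-s - 1) * (-1))) y := hmul
    rwa [hzero] at this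
  have hconst := constant_of_has_deriv_right_zero
    (f := H) (a := 0) (b := x)
    (fun y hy => ((hH y hy).continuousAt).continuousWithinAt)
    (fun y hy => ((hH y (Set.mem_Icc.2 ⟨hy.1, hy.2.le⟩)).hasDerivWithinAt))
  have hHx : H x = H 0 := hconst x (Set.mem_Icc.2 ⟨hx0, le_refl x⟩)
  -- compute H 0
  have hF0 : F 0 = 1 := by
    simp only [hFdef, Complex.ofReal_zero]
    rw [tsum_eq_single 0 (fun n hn => by simp [zero_pow hn])]
    simp [pochNewton]
  have hH0 : H 0 = 1 := by
    simp only [hHdef, hF0, Complex.ofReal_zero, sub_zero, Complex.one_cpow, one_mul]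
  -- conclude
  have hxne : (1 : ℂ) - (x : ℝ) ≠ 0 := by
    intro h
    have : (1 : ℝ) - x = 0 := by
      have := congrArg Complex.re h
      simpa using this
    linarith
  have hpow_ne : ((1 : ℂ) - (x:ℝ)) ^ s ≠ 0 := by
    intro h
    exact hxne (by simpa using Complex.cpow_eq_zero_iff _ _ |>.1 h |>.1)
  have hFx : F x = (1 - (x : ℂ)) ^ s := by
    have := hHx.trans hH0
    rw [hHdef] at this
    simp only at this
    rw [Complex.cpow_neg] at this
    field_simp at this
    exact this
  have : Summable fun n => pochNewton n s * (x : ℂ) ^ n :=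
    hsum x (by rw [abs_of_nonneg hx0]; exact hx1.le)
  have := this.hasSum
  rwa [show (∑' n, pochNewton n s * (x:ℂ) ^ n) = (1 - (x:ℂ)) ^ s from hFx] at this

/-- Newton interpolation of a Dirichlet series with absolutely summable coefficients:
if `g(s) = ∑_{m≥1} a_m m^{-s}`, then for every `s` with `Re s > 0`, the Newton series
`∑_{n} (∑_{k=0}^n P_k(n) g(k)) P_n(s)` converges to `g(s)`. -/
theorem newton_series_dirichlet (a : ℕ → ℂ) (ha : Summable fun m : ℕ => ‖a m‖)
    (g : ℂ → ℂ) (hg : ∀ s : ℂ, g s = ∑' m : ℕ, a m * ((m + 1 : ℕ) : ℂ) ^ (-s))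
    (s : ℂ) (hs : 0 < s.re) :
    Tendsto (fun N : ℕ => ∑ n ∈ Finset.range N,
        (∑ k ∈ Finset.range (n + 1), pochNewton k (n : ℂ) * g (k : ℂ)) * pochNewton n s)
      atTop (𝓝 (g s)) := by
  set w : ℕ → ℂ := fun m => ((m : ℂ) + 1)⁻¹ with hwdef
  set q : ℕ → ℝ := fun m => (m : ℝ) / ((m : ℝ) + 1) with hqdef
  have hm1 : ∀ m : ℕ, ((m : ℂ) + 1) ≠ 0 := fun m => Nat.cast_add_one_ne_zero m
  have hm1' : ∀ m : ℕ, ((m : ℝ) + 1) ≠ 0 := fun m => by positivity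
  have hq0 : ∀ m : ℕ, 0 ≤ q m := fun m => by rw [hqdef]; positivity
  have hq1 : ∀ m : ℕ, q m < 1 := fun m => by
    rw [hqdef]
    rw [div_lt_one (by positivity)]
    linarith
  have hQ : ∀ m : ℕ, ((q m : ℝ) : ℂ) = 1 - w m := by
    intro m
    have h := hm1 m
    rw [hqdef, hwdef]
    push_cast
    field_simp
    ring
  have hwle : ∀ m : ℕ, ‖w m‖ ≤ 1 := by
    intro m
    rw [hwdef]
    simp only [norm_inv]
    rw [inv_le_one_iff₀]
    right
    calc (1:ℝ) = ‖(1:ℂ)‖ := by simp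
      _ ≤ ‖(m:ℂ) + 1‖ := by
          rw [show ((m:ℂ) + 1) = (((m+1:ℕ)):ℂ) by push_cast; ring, Complex.norm_natCast]
          exact_mod_cast Nat.one_le_iff_ne_zero.2 (Nat.succ_ne_zero m)
  have hQle : ∀ m : ℕ, ‖((q m : ℝ) : ℂ)‖ ≤ 1 := by
    intro m
    rw [Complex.norm_real, Real.norm_eq_abs, abs_of_nonneg (hq0 m)]
    exact (hq1 m).le
  -- summability of the coefficient series
  have hsumw : ∀ k : ℕ, Summable fun m => a m * w m ^ k := by
    intro k
    apply Summable.of_norm_bounded ha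
    intro m
    rw [norm_mul, norm_pow]
    calc ‖a m‖ * ‖w m‖ ^ k ≤ ‖a m‖ * 1 ^ k := by
          gcongr
          exact hwle m
      _ = ‖a m‖ := by simp
  have hsumQ : ∀ n : ℕ, Summable fun m => a m * ((q m : ℝ) : ℂ) ^ n := by
    intro n
    apply Summable.of_norm_bounded ha
    intro m
    rw [norm_mul, norm_pow]
    calc ‖a m‖ * ‖((q m:ℝ):ℂ)‖ ^ n ≤ ‖a m‖ * 1 ^ n := by
          gcongr
          exact hQle m
      _ = ‖a m‖ := by simp
  -- the value of g at natural numbers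
  have hgk : ∀ k : ℕ, g (k : ℂ) = ∑' m, a m * w m ^ k := by
    intro k
    rw [hg]
    apply tsum_congr
    intro m
    congr 1
    rw [Complex.cpow_neg, Complex.cpow_natCast, ← inv_pow]
    simp only [hwdef]
    push_cast
    ring
  -- the coefficient identity
  have coeff : ∀ n : ℕ, ∑ k ∈ Finset.range (n + 1), pochNewton k (n : ℂ) * g (k : ℂ)
      = ∑' m, a m * ((q m : ℝ) : ℂ) ^ n := by
    intro n
    have step1 : ∑ k ∈ Finset.range (n + 1), pochNewton k (n : ℂ) * g (k : ℂ)
        = ∑ k ∈ Finset.range (n + 1),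
            ∑' m, ((-1 : ℂ) ^ k * (n.choose k : ℂ)) * (a m * w m ^ k) := by
      apply Finset.sum_congr rfl
      intro k hk
      rw [Finset.mem_range] at hk
      rw [pochNewton_nat k n (by omega), hgk k, ← tsum_mul_left]
    rw [step1, ← Summable.tsum_finsetSum (fun k _ => (hsumw k).mul_left _)]
    apply tsum_congr
    intro m
    have hbinom : (1 - w m) ^ n
        = ∑ k ∈ Finset.range (n + 1), (-1 : ℂ) ^ k * (n.choose k : ℂ) * w m ^ k := by
      have h := add_pow (-(w m)) 1 n
      simp only [one_pow, mul_one] at h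
      rw [show (1 : ℂ) - w m = -(w m) + 1 by ring, h]
      apply Finset.sum_congr rfl
      intro k _
      rw [neg_pow]
      ring
    rw [hQ m, hbinom, Finset.mul_sum]
    apply Finset.sum_congr rfl
    intro k _
    ring
  -- the partial-sum swap
  have swap : ∀ N : ℕ, ∑ n ∈ Finset.range N,
        (∑' m, a m * ((q m : ℝ) : ℂ) ^ n) * pochNewton n s
      = ∑' m, a m * ∑ n ∈ Finset.range N, pochNewton n s * ((q m : ℝ) : ℂ) ^ n := by
    intro N
    have step1 : ∀ n, (∑' m, a m * ((q m : ℝ) : ℂ) ^ n) * pochNewton n s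
        = ∑' m, a m * ((q m : ℝ) : ℂ) ^ n * pochNewton n s := fun n => tsum_mul_right.symm
    simp only [step1]
    rw [← Summable.tsum_finsetSum (fun n _ => (hsumQ n).mul_right _)]
    apply tsum_congr
    intro m
    rw [Finset.mul_sum]
    apply Finset.sum_congr rfl
    intro n _
    ring
  -- Tannery's theorem
  have hP := pochNewton_norm_summable hs
  set M : ℝ := ∑' n, ‖pochNewton n s‖ with hM
  have key : Tendsto (fun N : ℕ => ∑' m, a m *
      ∑ n ∈ Finset.range N, pochNewton n s * ((q m : ℝ) : ℂ) ^ n) atTop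
      (𝓝 (∑' m, a m * ((m + 1 : ℕ) : ℂ) ^ (-s))) := by
    apply tendsto_tsum_of_dominated_convergence (bound := fun m => ‖a m‖ * M)
      (ha.mul_right M)
    · intro m
      have hhs := (pochNewton_hasSum hs (hq0 m) (hq1 m)).tendsto_sum_nat
      have hval : (1 - ((q m : ℝ) : ℂ)) ^ s = ((m + 1 : ℕ) : ℂ) ^ (-s) := by
        rw [hQ m]
        have h1 : (1 : ℂ) - (1 - w m) = w m := by ring
        rw [h1]
        simp only [hwdef]
        have h2 : ((m : ℂ) + 1) = ((m + 1 : ℕ) : ℂ) := by push_cast; ring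
        rw [h2, Complex.inv_cpow _ _ (by
          rw [Complex.natCast_arg]
          exact Real.pi_ne_zero.symm), ← Complex.cpow_neg]
      rw [← hval]
      exact hhs.const_mul (a m)
    · apply Eventually.of_forall
      intro N m
      rw [norm_mul]
      gcongr
      calc ‖∑ n ∈ Finset.range N, pochNewton n s * ((q m : ℝ) : ℂ) ^ n‖
          ≤ ∑ n ∈ Finset.range N, ‖pochNewton n s * ((q m : ℝ) : ℂ) ^ n‖ :=
            norm_sum_le _ _
        _ ≤ ∑ n ∈ Finset.range N, ‖pochNewton n s‖ := by
            apply Finset.sum_le_sum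
            intro n _
            rw [norm_mul, norm_pow]
            calc ‖pochNewton n s‖ * ‖((q m:ℝ):ℂ)‖ ^ n ≤ ‖pochNewton n s‖ * 1 ^ n := by
                  gcongr
                  exact hQle m
              _ = ‖pochNewton n s‖ := by simp
        _ ≤ M := Summable.sum_le_tsum _ (fun n _ => norm_nonneg _) hP
  rw [hg s]
  have heq : (fun N : ℕ => ∑ n ∈ Finset.range N,
        (∑ k ∈ Finset.range (n + 1), pochNewton k (n : ℂ) * g (k : ℂ)) * pochNewton n s)
      = fun N : ℕ => ∑' m, a m * ∑ n ∈ Finset.range N, pochNewton n s * ((q m : ℝ) : ℂ) ^ n := by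
    funext N
    rw [← swap N]
    apply Finset.sum_congr rfl
    intro n _
    rw [coeff n]
  rw [heq]
  exact key
end

section
/- Let (a_m)_{m≥1} be complex numbers with ∑_{m≥1} |a_m| < ∞, let f(x) = ∑_{m≥1} a_m e^{−mx} for x > 0, and let g_k = ∑_{m≥1} a_m · m^{−k} for k ∈ ℕ. Then for every s ∈ ℂ with Re s > 0, the Mellin transform 𝓜f(s) = ∫_0^∞ f(x)·x^{s−1} dx exists and satisfies 𝓜f(s) = ∑_{n=0}^∞ (∑_{k=0}^n P_k(n)·Γ(s)·g_k)·P_n(s), the outer series converging. (For k ≥ 1 one has Γ(s)·g_k = (Γ(s)/Γ(k))·𝓜f(k), so this is the interpolation 𝓜f(s) = ∑_n [∑_k P_k(n)·(Γ(s)/Γ(k))·𝓜f(k)]·P_n(s).) -/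
open Filter Finset Topology

namespace NewtonAux
open Complex MeasureTheory Set

lemma poch_succ (n : ℕ) (α : ℂ) :
    ((n : ℂ) + 1) * pochNewton (n + 1) α = ((n : ℂ) - α) * pochNewton n α := by
  have h0 : (n.factorial : ℂ) ≠ 0 := Nat.cast_ne_zero.mpr n.factorial_ne_zero
  have h1 : ((n : ℂ) + 1) ≠ 0 := by
    have := Nat.cast_add_one_ne_zero (R := ℂ) n
    simpa using this
  simp only [pochNewton, Finset.prod_range_succ, Nat.factorial_succ, pow_succ]
  push_cast
  field_simp
  ring

lemma poch_natCast {k n : ℕ} (hk : k ≤ n) :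
    pochNewton k (n : ℂ) = (-1 : ℂ) ^ k * (n.choose k : ℂ) := by
  have hprod : ∀ k ≤ n, (∏ m ∈ Finset.range k, ((n : ℂ) - (m : ℂ)))
      = (n.descFactorial k : ℂ) := by
    intro k hk
    induction k with
    | zero => simp
    | succ k ih =>
      rw [Finset.prod_range_succ, ih (Nat.le_of_succ_le hk), Nat.descFactorial_succ]
      push_cast [Nat.cast_sub (Nat.le_of_succ_le hk)]
      ring
  have h0 : (k.factorial : ℂ) ≠ 0 := Nat.cast_ne_zero.mpr k.factorial_ne_zero
  rw [pochNewton, hprod k hk, Nat.descFactorial_eq_factorial_mul_choose]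
  push_cast
  field_simp

lemma finite_binom (n : ℕ) (x : ℂ) :
    ∑ k ∈ Finset.range (n + 1), pochNewton k (n : ℂ) * x ^ k = (1 - x) ^ n := by
  have h : (1 - x) ^ n = ((-x) + 1) ^ n := by ring_nf
  rw [h, add_pow]
  refine Finset.sum_congr rfl fun k hk => ?_
  rw [poch_natCast (Nat.lt_succ_iff.mp (Finset.mem_range.mp hk)), neg_pow x k]
  ring

lemma poch_eq (s : ℂ) (hs : ∀ m : ℕ, s ≠ (m : ℂ)) (n : ℕ) :
    pochNewton n s * (((n : ℂ) - s) * Complex.GammaSeq (-s) n) = (n : ℂ) ^ (-s) := by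
  have hne : ∀ j : ℕ, (-s) + (j : ℂ) ≠ 0 := fun j h => hs j (by linear_combination -h)
  have hprodne : (∏ j ∈ Finset.range (n + 1), ((-s) + (j : ℂ))) ≠ 0 :=
    Finset.prod_ne_zero_iff.mpr fun j _ => hne j
  have hfac : (n.factorial : ℂ) ≠ 0 := Nat.cast_ne_zero.mpr n.factorial_ne_zero
  have hsign : (∏ m ∈ Finset.range n, (s - (m : ℂ))) * (-1 : ℂ) ^ n
      = ∏ j ∈ Finset.range n, ((-s) + (j : ℂ)) := by
    calc (∏ m ∈ Finset.range n, (s - (m : ℂ))) * (-1 : ℂ) ^ n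
        = ∏ m ∈ Finset.range n, ((s - (m : ℂ)) * -1) := by
          rw [Finset.prod_mul_distrib, Finset.prod_const, Finset.card_range]
      _ = ∏ j ∈ Finset.range n, ((-s) + (j : ℂ)) :=
          Finset.prod_congr rfl fun m _ => by ring
  rw [pochNewton, Complex.GammaSeq, Finset.prod_range_succ]
  rw [Finset.prod_range_succ] at hprodne
  have h2 : ((-s) + (n : ℂ)) ≠ 0 := hne n
  have h3 : (∏ j ∈ Finset.range n, ((-s) + (j : ℂ))) ≠ 0 :=
    fun h => hprodne (by rw [h, zero_mul])
  rw [← hsign] at h3 ⊢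
  have hP := left_ne_zero_of_mul h3
  field_simp
  ring

lemma summable_norm_poch {s : ℂ} (hs : 0 < s.re) : Summable fun n => ‖pochNewton n s‖ := by
  by_cases hnat : ∃ k : ℕ, s = (k : ℂ)
  · obtain ⟨k, rfl⟩ := hnat
    refine summable_of_ne_finset_zero (s := Finset.range (k + 1)) fun n hn => ?_
    simp only [Finset.mem_range, not_lt] at hn
    have hk : k ∈ Finset.range n := Finset.mem_range.mpr (by omega)
    rw [pochNewton, Finset.prod_eq_zero hk (by simp), mul_zero, norm_zero]
  · push_neg at hnat
    have hG : Complex.Gamma (-s) ≠ 0 :=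
      Complex.Gamma_ne_zero fun m h => hnat m (by linear_combination -h)
    set c := ‖Complex.Gamma (-s)‖ with hc
    have hcpos : 0 < c := norm_pos_iff.mpr hG
    have hGn : Tendsto (fun n => ‖Complex.GammaSeq (-s) n‖) atTop (𝓝 c) :=
      (Complex.GammaSeq_tendsto_Gamma (-s)).norm
    have hev1 : ∀ᶠ n : ℕ in atTop, c / 2 < ‖Complex.GammaSeq (-s) n‖ :=
      hGn.eventually (lt_mem_nhds (show c / 2 < c by linarith))
    have hev2 : ∀ᶠ n : ℕ in atTop, 2 * ‖s‖ + 2 ≤ (n : ℝ) :=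
      tendsto_natCast_atTop_atTop.eventually_ge_atTop _
    have hsum : Summable fun n : ℕ => (4 / c) * (n : ℝ) ^ (-(s.re + 1)) :=
      (Real.summable_nat_rpow.mpr (by linarith)).mul_left _
    refine Summable.of_norm_bounded_eventually_nat hsum ?_
    filter_upwards [hev1, hev2] with n h1 h2
    have hn1 : (1 : ℝ) ≤ (n : ℝ) := by nlinarith [norm_nonneg s]
    have hnpos : (0 : ℝ) < (n : ℝ) := by linarith
    have hns : (n : ℝ) / 2 ≤ ‖(n : ℂ) - s‖ := by
      have h3 : ‖(n : ℂ)‖ - ‖s‖ ≤ ‖(n : ℂ) - s‖ := norm_sub_norm_le _ _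
      have h4 : ‖(n : ℂ)‖ = (n : ℝ) := by simp
      rw [h4] at h3; linarith
    have key : ‖pochNewton n s‖ * (‖(n : ℂ) - s‖ * ‖Complex.GammaSeq (-s) n‖)
        = (n : ℝ) ^ (-s.re) := by
      have h5 := congrArg norm (poch_eq s hnat n)
      rw [norm_mul, norm_mul] at h5
      rw [h5]
      have h6 : ((n : ℕ) : ℂ) = ((n : ℝ) : ℂ) := by push_cast; rfl
      rw [h6, Complex.norm_cpow_eq_rpow_re_of_pos hnpos, neg_re]
    have hDpos : 0 < (n : ℝ) / 2 * (c / 2) := by positivity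
    have hA : ‖pochNewton n s‖ ≤ (n : ℝ) ^ (-s.re) / ((n : ℝ) / 2 * (c / 2)) := by
      rw [le_div_iff₀ hDpos]
      calc ‖pochNewton n s‖ * ((n : ℝ) / 2 * (c / 2))
          ≤ ‖pochNewton n s‖ * (‖(n : ℂ) - s‖ * ‖Complex.GammaSeq (-s) n‖) := by
            apply mul_le_mul_of_nonneg_left _ (norm_nonneg _)
            apply mul_le_mul hns h1.le (by positivity) (norm_nonneg _)
        _ = (n : ℝ) ^ (-s.re) := key
    rw [norm_norm]
    refine hA.trans (le_of_eq ?_)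
    rw [show -(s.re + 1) = -s.re + (-1) by ring, Real.rpow_add hnpos, Real.rpow_neg_one]
    field_simp
    ring

/-- The sum of the Newton binomial series. -/
noncomputable def phi (s : ℂ) (t : ℝ) : ℂ := ∑' n, pochNewton n s * (t : ℂ) ^ n

lemma summable_deriv_aux {s : ℂ} (hB : Summable fun n => ‖pochNewton n s‖) {r : ℝ}
    (hr0 : 0 ≤ r) (hr1 : r < 1) :
    Summable fun n : ℕ => ‖pochNewton n s‖ * ((n : ℝ) * r ^ (n - 1)) := by
  set B := ∑' n, ‖pochNewton n s‖ with hBdef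
  have hb : ∀ n, ‖pochNewton n s‖ ≤ B := fun n => hB.le_tsum n fun _ _ => norm_nonneg _
  have hv : Summable fun n : ℕ => (n : ℝ) * r ^ (n - 1) := by
    rw [← summable_nat_add_iff 1]
    have h1 : Summable fun n : ℕ => ((n : ℝ) ^ 1 * r ^ n) := by
      apply summable_pow_mul_geometric_of_norm_lt_one
      rwa [Real.norm_eq_abs, _root_.abs_of_nonneg hr0]
    have h2 : Summable fun n : ℕ => r ^ n := summable_geometric_of_lt_one hr0 hr1
    refine ((h1.add h2).congr fun n => ?_)
    push_cast
    ring
  refine Summable.of_nonneg_of_le (fun n => by positivity) (fun n => ?_) (hv.mul_left B)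
  exact mul_le_mul_of_nonneg_right (hb n) (by positivity)

lemma hasDerivAt_phi {s : ℂ} (hB : Summable fun n => ‖pochNewton n s‖) {y : ℝ}
    (hy : |y| < 1) :
    HasDerivAt (phi s)
      (∑' n, pochNewton n s * ((n : ℂ) * (y : ℂ) ^ (n - 1))) y := by
  set r' : ℝ := (|y| + 1) / 2 with hr'
  have hr'0 : 0 ≤ r' := by positivity
  have hr'1 : r' < 1 := by rw [hr']; linarith
  have hyr' : |y| < r' := by rw [hr']; linarith
  have hu := summable_deriv_aux hB hr'0 hr'1
  have key := hasDerivAt_tsum_of_isPreconnected (𝕜 := ℝ) (F := ℂ)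
    (u := fun n => ‖pochNewton n s‖ * ((n : ℝ) * r' ^ (n - 1)))
    (g := fun n (t : ℝ) => pochNewton n s * (t : ℂ) ^ n)
    (g' := fun n (t : ℝ) => pochNewton n s * ((n : ℂ) * (t : ℂ) ^ (n - 1)))
    (t := Set.Ioo (-r') r') (y₀ := 0) (y := y)
    hu isOpen_Ioo (convex_Ioo _ _).isPreconnected
    (fun n t _ => by
      exact ((hasDerivAt_pow n ((t : ℝ) : ℂ)).comp_ofReal).const_mul (pochNewton n s))
    (fun n t ht => by
      rw [norm_mul, norm_mul, norm_pow]
      have h1 : ‖((t : ℝ) : ℂ)‖ = |t| := by simp [Complex.norm_real]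
      have h2 : ‖((n : ℕ) : ℂ)‖ = (n : ℝ) := by simp
      rw [h1, h2]
      have ht' : |t| ≤ r' := by
        rw [abs_le]; exact ⟨(Set.mem_Ioo.mp ht).1.le, (Set.mem_Ioo.mp ht).2.le⟩
      exact mul_le_mul_of_nonneg_left (by
        exact mul_le_mul_of_nonneg_left
          (pow_le_pow_left₀ (abs_nonneg t) ht' _) (Nat.cast_nonneg n)) (norm_nonneg _))
    (Set.mem_Ioo.mpr ⟨by linarith [abs_nonneg y], by linarith [abs_nonneg y]⟩)
    (by
      refine summable_of_ne_finset_zero (s := {0}) fun n hn => ?_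
      have : n ≠ 0 := by simpa using hn
      simp [zero_pow this])
    (Set.mem_Ioo.mpr ⟨by cases abs_lt.mp hyr' with | intro h1 h2 => linarith,
      (le_abs_self y).trans_lt hyr'⟩)
  exact key

lemma norm_term (s : ℂ) (n : ℕ) (y : ℝ) (k : ℕ) :
    ‖pochNewton n s * ((n : ℂ) * (y : ℂ) ^ k)‖ = ‖pochNewton n s‖ * ((n : ℝ) * |y| ^ k) := by
  rw [norm_mul, norm_mul, norm_pow]
  norm_num [Complex.norm_real]

lemma ode {s : ℂ} (hB : Summable fun n => ‖pochNewton n s‖) {y : ℝ} (hy : |y| < 1) :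
    (1 - (y : ℂ)) * (∑' n, pochNewton n s * ((n : ℂ) * (y : ℂ) ^ (n - 1)))
      = -s * phi s y := by
  set x : ℂ := (y : ℂ) with hx
  have habs : 0 ≤ |y| := abs_nonneg y
  have haux := summable_deriv_aux hB habs hy
  have hsum1 : Summable fun n => pochNewton n s * ((n : ℂ) * x ^ (n - 1)) := by
    apply Summable.of_norm
    exact haux.congr fun n => (norm_term s n y (n - 1)).symm
  have hsum2 : Summable fun n => pochNewton n s * ((n : ℂ) * x ^ n) := by
    apply Summable.of_norm
    refine Summable.of_nonneg_of_le (fun n => norm_nonneg _) (fun n => ?_) haux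
    rw [norm_term]
    have h7 : |y| ^ n ≤ |y| ^ (n - 1) := pow_le_pow_of_le_one habs hy.le (Nat.sub_le n 1)
    exact mul_le_mul_of_nonneg_left
      (mul_le_mul_of_nonneg_left h7 (Nat.cast_nonneg n)) (norm_nonneg _)
  have hsum3 : Summable fun n => pochNewton n s * x ^ n := by
    apply Summable.of_norm
    refine Summable.of_nonneg_of_le (fun n => norm_nonneg _) (fun n => ?_) hB
    rw [norm_mul, norm_pow]
    have h1 : ‖x‖ = |y| := by simp [hx, Complex.norm_real]
    have h8 : ‖x‖ ^ n ≤ 1 := pow_le_one₀ (norm_nonneg x) (by rw [h1]; exact hy.le)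
    nlinarith [norm_nonneg (pochNewton n s)]
  set D := ∑' n, pochNewton n s * ((n : ℂ) * x ^ (n - 1)) with hD
  have step1 : D = ∑' (n : ℕ), (((n : ℂ)) - s) * pochNewton n s * x ^ n := by
    rw [hD, hsum1.tsum_eq_zero_add]
    simp only [Nat.cast_zero, zero_mul, mul_zero, zero_add]
    refine tsum_congr fun n => ?_
    have h1 : ((n + 1 : ℕ) : ℂ) = (n : ℂ) + 1 := by push_cast; ring
    have h2 : (n + 1) - 1 = n := rfl
    rw [h2, h1]
    calc pochNewton (n + 1) s * (((n : ℂ) + 1) * x ^ n)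
        = (((n : ℂ) + 1) * pochNewton (n + 1) s) * x ^ n := by ring
      _ = (((n : ℂ)) - s) * pochNewton n s * x ^ n := by rw [poch_succ]
  have step2 : ∑' (n : ℕ), (((n : ℂ)) - s) * pochNewton n s * x ^ n
      = ∑' n, pochNewton n s * ((n : ℂ) * x ^ n) - s * phi s y := by
    rw [phi, ← hx, ← tsum_mul_left]
    rw [← hsum2.tsum_sub (hsum3.mul_left s)]
    exact tsum_congr fun n => by ring
  have step3 : ∑' n, pochNewton n s * ((n : ℂ) * x ^ n) = x * D := by
    rw [hD, ← tsum_mul_left]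
    refine tsum_congr fun n => ?_
    cases n with
    | zero => simp
    | succ n =>
      have h2 : (n + 1) - 1 = n := rfl
      rw [h2]
      push_cast
      ring
  have key : D = x * D - s * phi s y := by
    conv_lhs => rw [step1, step2, step3]
  linear_combination key

lemma phi_eq {s : ℂ} (hB : Summable fun n => ‖pochNewton n s‖) {t : ℝ}
    (ht0 : 0 ≤ t) (ht1 : t < 1) :
    phi s t = Complex.exp (s * (Real.log (1 - t) : ℂ)) := by
  set h : ℝ → ℂ := fun x => Complex.exp (-s * (Real.log (1 - x) : ℂ)) * phi s x with hh
  have hderiv : ∀ x ∈ Set.Ioo (-1 : ℝ) 1, HasDerivAt h 0 x := by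
    intro x hx
    obtain ⟨hx1, hx2⟩ := hx
    have hx' : |x| < 1 := abs_lt.mpr ⟨hx1, hx2⟩
    have h1x : (0 : ℝ) < 1 - x := by linarith
    have hD := hasDerivAt_phi hB hx'
    set D := ∑' n, pochNewton n s * ((n : ℂ) * (x : ℂ) ^ (n - 1)) with hDdef
    have hlog : HasDerivAt (fun x : ℝ => Real.log (1 - x)) (-(1 - x)⁻¹) x := by
      have h1 : HasDerivAt (fun x : ℝ => 1 - x) (-1) x := by
        simpa using (hasDerivAt_id x).const_sub 1
      have := (Real.hasDerivAt_log h1x.ne').comp x h1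
      simpa [Function.comp_def] using this
    have hexp : HasDerivAt (fun x : ℝ => Complex.exp (-s * (Real.log (1 - x) : ℂ)))
        (Complex.exp (-s * (Real.log (1 - x) : ℂ)) * (-s * ((-(1 - x)⁻¹ : ℝ) : ℂ))) x :=
      ((hlog.ofReal_comp).const_mul (-s)).cexp
    have hmul := hexp.mul hD
    have hode := ode hB hx'
    convert hmul using 1
    · rfl
    · rfl
    rw [← hDdef] at hode
    have hx1C : (1 : ℂ) - (x : ℂ) ≠ 0 := by
      have h9 : ((1 - x : ℝ) : ℂ) ≠ 0 := by exact_mod_cast h1x.ne'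
      push_cast at h9
      simpa using h9
    push_cast
    have hinv : (1 - (x : ℂ))⁻¹ * (1 - (x : ℂ)) = 1 := inv_mul_cancel₀ hx1C
    linear_combination (-(Complex.exp (-s * (Real.log (1 - x) : ℂ)) * (1 - (x : ℂ))⁻¹)) * hode
      + (Complex.exp (-s * (Real.log (1 - x) : ℂ)) * D) * hinv
  have hIcc : Set.Icc (0 : ℝ) t ⊆ Set.Ioo (-1 : ℝ) 1 := fun x hx =>
    ⟨by linarith [hx.1], lt_of_le_of_lt hx.2 ht1⟩
  have hcont : ContinuousOn h (Set.Icc 0 t) := fun x hx =>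
    ((hderiv x (hIcc hx)).continuousAt).continuousWithinAt
  have hconst := constant_of_has_deriv_right_zero hcont
    (fun x hx => ((hderiv x (hIcc (Set.mem_Icc_of_Ico hx))).hasDerivWithinAt)) t
    (Set.right_mem_Icc.mpr ht0)
  have hphi0 : phi s 0 = 1 := by
    rw [phi, tsum_eq_single 0 (fun n hn => by simp [zero_pow hn])]
    simp [pochNewton]
  have hh0 : h 0 = 1 := by simp [hh, hphi0]
  rw [hh0] at hconst
  have hmul2 : Complex.exp (s * (Real.log (1 - t) : ℂ)) * h t
      = Complex.exp (s * (Real.log (1 - t) : ℂ)) := by rw [hconst]; ring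
  rw [hh] at hmul2
  calc phi s t = (Complex.exp (s * (Real.log (1 - t) : ℂ)) *
        Complex.exp (-s * (Real.log (1 - t) : ℂ))) * phi s t := by
        rw [← Complex.exp_add]; simp
    _ = Complex.exp (s * (Real.log (1 - t) : ℂ)) := by rw [mul_assoc, hmul2]

lemma binom_tendsto {s : ℂ} (hB : Summable fun n => ‖pochNewton n s‖) (m : ℕ) :
    Tendsto (fun N => ∑ n ∈ Finset.range N,
        pochNewton n s * (1 - ((m + 1 : ℕ) : ℂ)⁻¹) ^ n) atTop
      (𝓝 (((m + 1 : ℕ) : ℂ) ^ (-s))) := by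
  have hm1 : (0 : ℝ) < (m + 1 : ℕ) := by positivity
  set t : ℝ := 1 - ((m + 1 : ℕ) : ℝ)⁻¹ with hts
  have hinv1 : ((m + 1 : ℕ) : ℝ)⁻¹ ≤ 1 := by
    rw [inv_le_one_iff₀]; right
    exact_mod_cast Nat.one_le_iff_ne_zero.mpr (Nat.succ_ne_zero m)
  have hinv0 : 0 < ((m + 1 : ℕ) : ℝ)⁻¹ := by positivity
  have ht0 : 0 ≤ t := by rw [hts]; linarith
  have ht1 : t < 1 := by rw [hts]; linarith
  have hcast : (1 - ((m + 1 : ℕ) : ℂ)⁻¹) = ((t : ℝ) : ℂ) := by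
    rw [hts]; push_cast; ring
  have hsummable : Summable fun n => pochNewton n s * ((t : ℝ) : ℂ) ^ n := by
    apply Summable.of_norm
    refine Summable.of_nonneg_of_le (fun n => norm_nonneg _) (fun n => ?_) hB
    rw [norm_mul, norm_pow]
    have h1 : ‖((t : ℝ) : ℂ)‖ = |t| := by simp [Complex.norm_real]
    have h2 : ‖((t : ℝ) : ℂ)‖ ^ n ≤ 1 :=
      pow_le_one₀ (norm_nonneg _) (by rw [h1, _root_.abs_of_nonneg ht0]; exact ht1.le)
    nlinarith [norm_nonneg (pochNewton n s)]
  have hval : Complex.exp (s * (Real.log (1 - t) : ℂ)) = ((m + 1 : ℕ) : ℂ) ^ (-s) := by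
    have h1t : 1 - t = ((m + 1 : ℕ) : ℝ)⁻¹ := by rw [hts]; ring
    have hlog : Real.log (1 - t) = -Real.log ((m + 1 : ℕ) : ℝ) := by
      rw [h1t, Real.log_inv]
    have hCne : ((m + 1 : ℕ) : ℂ) ≠ 0 := Nat.cast_ne_zero.mpr (Nat.succ_ne_zero m)
    rw [Complex.cpow_def_of_ne_zero hCne, hlog]
    have hClog : Complex.log ((m + 1 : ℕ) : ℂ) = (Real.log ((m + 1 : ℕ) : ℝ) : ℂ) := by
      rw [← Complex.ofReal_natCast, ← Complex.ofReal_log (by positivity)]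
    rw [hClog]
    congr 1
    push_cast
    ring
  have htd := (hsummable.hasSum.tendsto_sum_nat)
  rw [show ∑' n, pochNewton n s * ((t : ℝ) : ℂ) ^ n = phi s t from rfl] at htd
  rw [phi_eq hB ht0 ht1, hval] at htd
  exact htd.congr fun N => Finset.sum_congr rfl fun n _ => by rw [hcast]

variable {a : ℕ → ℂ} {f : ℝ → ℂ} {s : ℂ}

lemma exp_term_eq (m : ℕ) (t : ℝ) :
    a m * ((Real.exp (-(((m + 1 : ℕ) : ℝ)) * t) : ℝ) : ℂ)
      = a m * Complex.exp (-((m + 1 : ℕ) : ℂ) * (t : ℂ)) := by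
  rw [Complex.ofReal_exp]
  push_cast
  ring_nf

lemma summable_exp_term (ha : Summable fun m : ℕ => ‖a m‖) {t : ℝ} (ht : 0 < t) :
    Summable fun m : ℕ => a m * Complex.exp (-((m + 1 : ℕ) : ℂ) * (t : ℂ)) := by
  apply Summable.of_norm
  refine Summable.of_nonneg_of_le (fun m => norm_nonneg _) (fun m => ?_) ha
  rw [norm_mul]
  have h1 : ‖Complex.exp (-((m + 1 : ℕ) : ℂ) * (t : ℂ))‖ ≤ 1 := by
    have hne : ‖Complex.exp (-((m + 1 : ℕ) : ℂ) * (t : ℂ))‖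
        = Real.exp ((-((m + 1 : ℕ) : ℂ) * (t : ℂ)).re) := by
      rw [Complex.norm_exp]
    rw [hne]
    apply Real.exp_le_one_iff.mpr
    have : (-((m + 1 : ℕ) : ℂ) * (t : ℂ)).re = -((m + 1 : ℕ) : ℝ) * t := by
      simp [Complex.mul_re]
    rw [this]
    nlinarith [(Nat.cast_pos (α := ℝ)).mpr (Nat.succ_pos m)]
  nlinarith [norm_nonneg (a m)]

lemma mellin_value (ha : Summable fun m : ℕ => ‖a m‖)
    (hf : ∀ x : ℝ, 0 < x →
      f x = ∑' m : ℕ, a m * Complex.exp (-((m + 1 : ℕ) : ℂ) * (x : ℂ)))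
    (hs : 0 < s.re) :
    HasSum (fun m : ℕ => Complex.Gamma s * a m / (((m + 1 : ℕ) : ℝ) : ℂ) ^ s)
      (mellin f s) := by
  apply hasSum_mellin (p := fun m : ℕ => ((m + 1 : ℕ) : ℝ))
    (fun m => Or.inr (by positivity)) hs
  · intro t ht
    rw [Set.mem_Ioi] at ht
    have heq : (fun m : ℕ => a m * ((Real.exp (-(((m + 1 : ℕ) : ℝ)) * t) : ℝ) : ℂ))
        = fun m : ℕ => a m * Complex.exp (-((m + 1 : ℕ) : ℂ) * (t : ℂ)) :=
      funext fun m => exp_term_eq m t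
    rw [heq]
    exact ((summable_exp_term ha ht).hasSum_iff).mpr (hf t ht).symm
  · refine Summable.of_nonneg_of_le (fun m => by positivity) (fun m => ?_) ha
    have h1 : (1 : ℝ) ≤ ((m + 1 : ℕ) : ℝ) ^ s.re := by
      have : ((m + 1 : ℕ) : ℝ) ^ (0 : ℝ) ≤ ((m + 1 : ℕ) : ℝ) ^ s.re := by
        apply Real.rpow_le_rpow_of_exponent_le _ hs.le
        exact_mod_cast Nat.one_le_iff_ne_zero.mpr (Nat.succ_ne_zero m)
      rwa [Real.rpow_zero] at this
    exact div_le_self (norm_nonneg _) h1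

lemma mellin_conv (ha : Summable fun m : ℕ => ‖a m‖)
    (hf : ∀ x : ℝ, 0 < x →
      f x = ∑' m : ℕ, a m * Complex.exp (-((m + 1 : ℕ) : ℂ) * (x : ℂ)))
    (hs : 0 < s.re) : MellinConvergent f s := by
  have hcont : Continuous (fun x : ℝ =>
      ∑' m : ℕ, a m * Complex.exp (-((m + 1 : ℕ) : ℂ) * ((max x 0 : ℝ) : ℂ))) := by
    refine continuous_tsum (fun m => ?_) ha (fun m x => ?_)
    · exact continuous_const.mul (Complex.continuous_exp.comp
        (continuous_const.mul (Complex.continuous_ofReal.comp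
          (continuous_id.max continuous_const))))
    · have hne : ‖Complex.exp (-((m + 1 : ℕ) : ℂ) * ((max x 0 : ℝ) : ℂ))‖
          = Real.exp ((-((m + 1 : ℕ) : ℂ) * ((max x 0 : ℝ) : ℂ)).re) := by
        rw [Complex.norm_exp]
      rw [norm_mul, hne]
      have hre : (-((m + 1 : ℕ) : ℂ) * ((max x 0 : ℝ) : ℂ)).re
          = -((m + 1 : ℕ) : ℝ) * max x 0 := by simp [Complex.mul_re]
      have hle : Real.exp ((-((m + 1 : ℕ) : ℂ) * ((max x 0 : ℝ) : ℂ)).re) ≤ 1 := by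
        rw [hre]
        apply Real.exp_le_one_iff.mpr
        have h0 : (0 : ℝ) ≤ max x 0 := le_max_right x 0
        nlinarith [(Nat.cast_pos (α := ℝ)).mpr (Nat.succ_pos m)]
      nlinarith [norm_nonneg (a m), Real.exp_pos ((-((m + 1 : ℕ) : ℂ) * ((max x 0 : ℝ) : ℂ)).re)]
  have hae : AEStronglyMeasurable f (volume.restrict (Ioi 0)) := by
    refine (hcont.aestronglyMeasurable).congr ?_
    rw [Filter.EventuallyEq, ae_restrict_iff' measurableSet_Ioi]
    refine Filter.Eventually.of_forall fun x hx => ?_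
    rw [Set.mem_Ioi] at hx
    rw [hf x hx, max_eq_left hx.le]
  have haes : AEStronglyMeasurable (fun t : ℝ => ((t : ℂ) ^ (s - 1)) • f t)
      (volume.restrict (Ioi 0)) := by
    refine AEStronglyMeasurable.fun_smul ?_ hae
    refine (ContinuousOn.aestronglyMeasurable (fun x hx => ?_) measurableSet_Ioi)
    exact (Complex.continuousAt_ofReal_cpow_const x (s - 1)
      (Or.inr (ne_of_gt hx))).continuousWithinAt
  set C := ∑' m, ‖a m‖ with hC
  have hbound : IntegrableOn
      (fun x : ℝ => C * (Real.exp (-x) * x ^ (s.re - 1))) (Ioi 0) :=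
    (Real.GammaIntegral_convergent hs).const_mul C
  have hbd : ∀ᵐ (x : ℝ) ∂(volume.restrict (Ioi 0)),
      ‖((x : ℂ) ^ (s - 1)) • f x‖ ≤ C * (Real.exp (-x) * x ^ (s.re - 1)) := by
    rw [ae_restrict_iff' measurableSet_Ioi]
    refine Filter.Eventually.of_forall fun x hx => ?_
    rw [Set.mem_Ioi] at hx
    rw [hf x hx]
    have h1 : ‖(x : ℂ) ^ (s - 1)‖ = x ^ (s.re - 1) := by
      rw [Complex.norm_cpow_eq_rpow_re_of_pos hx, Complex.sub_re,
        Complex.one_re]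
    rw [norm_smul, h1]
    have hterm : ∀ m : ℕ, ‖a m * Complex.exp (-((m + 1 : ℕ) : ℂ) * (x : ℂ))‖
        ≤ ‖a m‖ * Real.exp (-x) := by
      intro m
      rw [norm_mul]
      have hne : ‖Complex.exp (-((m + 1 : ℕ) : ℂ) * (x : ℂ))‖
          = Real.exp ((-((m + 1 : ℕ) : ℂ) * (x : ℂ)).re) := by
        rw [Complex.norm_exp]
      rw [hne]
      have hre : (-((m + 1 : ℕ) : ℂ) * (x : ℂ)).re = -((m + 1 : ℕ) : ℝ) * x := by
        simp [Complex.mul_re]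
      have hle : Real.exp ((-((m + 1 : ℕ) : ℂ) * (x : ℂ)).re) ≤ Real.exp (-x) := by
        rw [hre]
        apply Real.exp_le_exp.mpr
        nlinarith [(Nat.one_le_cast (α := ℝ)).mpr (Nat.one_le_iff_ne_zero.mpr (Nat.succ_ne_zero m))]
      exact mul_le_mul_of_nonneg_left hle (norm_nonneg _)
    have hsum2 : Summable fun m : ℕ => ‖a m‖ * Real.exp (-x) := ha.mul_right _
    have hnorm : Summable fun m : ℕ => ‖a m * Complex.exp (-((m + 1 : ℕ) : ℂ) * (x : ℂ))‖ :=
      Summable.of_nonneg_of_le (fun _ => norm_nonneg _) hterm hsum2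
    have hfx : ‖∑' m : ℕ, a m * Complex.exp (-((m + 1 : ℕ) : ℂ) * (x : ℂ))‖
        ≤ C * Real.exp (-x) := by
      calc ‖∑' m : ℕ, a m * Complex.exp (-((m + 1 : ℕ) : ℂ) * (x : ℂ))‖
          ≤ ∑' m : ℕ, ‖a m * Complex.exp (-((m + 1 : ℕ) : ℂ) * (x : ℂ))‖ :=
            norm_tsum_le_tsum_norm hnorm
        _ ≤ ∑' m : ℕ, ‖a m‖ * Real.exp (-x) := Summable.tsum_le_tsum hterm hnorm hsum2
        _ = C * Real.exp (-x) := by rw [tsum_mul_right]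
    calc x ^ (s.re - 1) * ‖∑' m : ℕ, a m * Complex.exp (-((m + 1 : ℕ) : ℂ) * (x : ℂ))‖
        ≤ x ^ (s.re - 1) * (C * Real.exp (-x)) :=
          mul_le_mul_of_nonneg_left hfx (Real.rpow_nonneg hx.le _)
      _ = C * (Real.exp (-x) * x ^ (s.re - 1)) := by ring
  exact hbound.mono' haes hbd

lemma inner_sum {n : ℕ} {g : ℕ → ℂ} (ha : Summable fun m : ℕ => ‖a m‖)
    (hg : ∀ k : ℕ, g k = ∑' m : ℕ, a m * ((m + 1 : ℕ) : ℂ) ^ (-(k : ℂ))) :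
    ∑ k ∈ Finset.range (n + 1), pochNewton k (n : ℂ) * (Complex.Gamma s * g k)
      = Complex.Gamma s * ∑' m : ℕ, a m * (1 - ((m + 1 : ℕ) : ℂ)⁻¹) ^ n := by
  have hpow : ∀ k m : ℕ, ((m + 1 : ℕ) : ℂ) ^ (-(k : ℂ)) = (((m + 1 : ℕ) : ℂ)⁻¹) ^ k := by
    intro k m
    rw [Complex.cpow_neg, Complex.cpow_natCast, inv_pow]
  have hnormpow : ∀ k m : ℕ, ‖((m + 1 : ℕ) : ℂ) ^ (-(k : ℂ))‖ ≤ 1 := by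
    intro k m
    rw [hpow, norm_pow]
    apply pow_le_one₀ (norm_nonneg _)
    rw [norm_inv]
    rw [inv_le_one_iff₀]; right
    have h1 : ‖((m + 1 : ℕ) : ℂ)‖ = ((m + 1 : ℕ) : ℝ) := by
      exact_mod_cast Complex.norm_natCast (m + 1)
    rw [h1]
    exact_mod_cast Nat.one_le_iff_ne_zero.mpr (Nat.succ_ne_zero m)
  have hsumk : ∀ k : ℕ, Summable fun m : ℕ => a m * ((m + 1 : ℕ) : ℂ) ^ (-(k : ℂ)) := by
    intro k
    apply Summable.of_norm
    refine Summable.of_nonneg_of_le (fun m => norm_nonneg _) (fun m => ?_) ha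
    rw [norm_mul]
    nlinarith [norm_nonneg (a m), hnormpow k m, norm_nonneg (((m + 1 : ℕ) : ℂ) ^ (-(k : ℂ)))]
  set F : ℕ → ℕ → ℂ := fun k m =>
    (pochNewton k (n : ℂ) * Complex.Gamma s) * (a m * ((m + 1 : ℕ) : ℂ) ^ (-(k : ℂ))) with hF
  have step1 : ∀ k ∈ Finset.range (n + 1),
      pochNewton k (n : ℂ) * (Complex.Gamma s * g k) = ∑' m, F k m := by
    intro k _
    calc pochNewton k (n : ℂ) * (Complex.Gamma s * g k)
        = (pochNewton k (n : ℂ) * Complex.Gamma s)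
            * (∑' m : ℕ, a m * ((m + 1 : ℕ) : ℂ) ^ (-(k : ℂ))) := by rw [hg k]; ring
      _ = ∑' m, F k m := tsum_mul_left.symm
  have step3 : ∀ m : ℕ, ∑ k ∈ Finset.range (n + 1), F k m
      = Complex.Gamma s * (a m * (1 - ((m + 1 : ℕ) : ℂ)⁻¹) ^ n) := by
    intro m
    have h1 : ∑ k ∈ Finset.range (n + 1), F k m
        = (Complex.Gamma s * a m) *
            ∑ k ∈ Finset.range (n + 1), pochNewton k (n : ℂ) * (((m + 1 : ℕ) : ℂ)⁻¹) ^ k := by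
      rw [Finset.mul_sum]
      exact Finset.sum_congr rfl fun k _ => by rw [hF]; simp only; rw [hpow k m]; ring
    rw [h1, finite_binom]
    ring
  calc ∑ k ∈ Finset.range (n + 1), pochNewton k (n : ℂ) * (Complex.Gamma s * g k)
      = ∑ k ∈ Finset.range (n + 1), ∑' m, F k m := Finset.sum_congr rfl step1
    _ = ∑' m, ∑ k ∈ Finset.range (n + 1), F k m :=
        (Summable.tsum_finsetSum (fun k _ => (hsumk k).mul_left _)).symm
    _ = ∑' m : ℕ, Complex.Gamma s * (a m * (1 - ((m + 1 : ℕ) : ℂ)⁻¹) ^ n) := tsum_congr step3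
    _ = Complex.Gamma s * ∑' m : ℕ, a m * (1 - ((m + 1 : ℕ) : ℂ)⁻¹) ^ n := tsum_mul_left

end NewtonAux

/-- Newton interpolation of the Mellin transform of `f(x) = ∑_{m≥1} a_m e^{-mx}`: for
`Re s > 0` the Mellin transform `𝓜f(s)` exists and equals
`∑_{n} (∑_{k=0}^n P_k(n) Γ(s) g_k) P_n(s)`, where `g_k = ∑_{m≥1} a_m m^{-k}`. -/
theorem newton_series_mellin (a : ℕ → ℂ) (ha : Summable fun m : ℕ => ‖a m‖)
    (f : ℝ → ℂ) (hf : ∀ x : ℝ, 0 < x →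
      f x = ∑' m : ℕ, a m * Complex.exp (-((m + 1 : ℕ) : ℂ) * (x : ℂ)))
    (g : ℕ → ℂ) (hg : ∀ k : ℕ, g k = ∑' m : ℕ, a m * ((m + 1 : ℕ) : ℂ) ^ (-(k : ℂ)))
    (s : ℂ) (hs : 0 < s.re) :
    MellinConvergent f s ∧
      Tendsto (fun N : ℕ => ∑ n ∈ Finset.range N,
          (∑ k ∈ Finset.range (n + 1), pochNewton k (n : ℂ) * (Complex.Gamma s * g k)) *
            pochNewton n s)
        atTop (𝓝 (mellin f s)) := by
  have hB := NewtonAux.summable_norm_poch hs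
  set B := ∑' n, ‖pochNewton n s‖ with hBdef
  refine ⟨NewtonAux.mellin_conv ha hf hs, ?_⟩
  have hM := NewtonAux.mellin_value ha hf hs
  have hMeq : mellin f s = Complex.Gamma s * ∑' m : ℕ, a m * ((m + 1 : ℕ) : ℂ) ^ (-s) := by
    rw [← hM.tsum_eq, ← tsum_mul_left]
    refine tsum_congr fun m => ?_
    have hCne : ((m + 1 : ℕ) : ℂ) ≠ 0 := Nat.cast_ne_zero.mpr (Nat.succ_ne_zero m)
    have hpow : ((((m + 1 : ℕ) : ℝ)) : ℂ) ^ s = ((m + 1 : ℕ) : ℂ) ^ s := by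
      norm_cast
    have hne : ((m + 1 : ℕ) : ℂ) ^ s ≠ 0 := by
      rw [Ne, Complex.cpow_eq_zero_iff]
      exact fun h => hCne h.1
    rw [hpow, Complex.cpow_neg]
    field_simp
  rw [hMeq]
  have hτ : ∀ m : ℕ, ‖(1 - ((m + 1 : ℕ) : ℂ)⁻¹)‖ ≤ 1 := by
    intro m
    have hcst : (1 - ((m + 1 : ℕ) : ℂ)⁻¹) = (((1 - ((m + 1 : ℕ) : ℝ)⁻¹ : ℝ)) : ℂ) := by
      push_cast; ring
    have hinv1 : ((m + 1 : ℕ) : ℝ)⁻¹ ≤ 1 := by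
      rw [inv_le_one_iff₀]; right
      exact_mod_cast Nat.one_le_iff_ne_zero.mpr (Nat.succ_ne_zero m)
    have hinv0 : 0 < ((m + 1 : ℕ) : ℝ)⁻¹ := by positivity
    rw [hcst, Complex.norm_real, Real.norm_eq_abs, _root_.abs_of_nonneg (by linarith)]
    linarith
  have hsum_tau : ∀ n : ℕ, Summable fun m : ℕ => a m * (1 - ((m + 1 : ℕ) : ℂ)⁻¹) ^ n := by
    intro n
    apply Summable.of_norm
    refine Summable.of_nonneg_of_le (fun m => norm_nonneg _) (fun m => ?_) ha
    rw [norm_mul, norm_pow]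
    nlinarith [norm_nonneg (a m), pow_le_one₀ (norm_nonneg (1 - ((m + 1 : ℕ) : ℂ)⁻¹)) (hτ m) (n := n),
      pow_nonneg (norm_nonneg (1 - ((m + 1 : ℕ) : ℂ)⁻¹)) n]
  have hswap : ∀ N : ℕ, ∑ n ∈ Finset.range N,
      (∑ k ∈ Finset.range (n + 1), pochNewton k (n : ℂ) * (Complex.Gamma s * g k)) *
        pochNewton n s
      = Complex.Gamma s * ∑' m : ℕ, a m *
          ∑ n ∈ Finset.range N, pochNewton n s * (1 - ((m + 1 : ℕ) : ℂ)⁻¹) ^ n := by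
    intro N
    have step1 : ∀ n ∈ Finset.range N,
        (∑ k ∈ Finset.range (n + 1), pochNewton k (n : ℂ) * (Complex.Gamma s * g k)) *
          pochNewton n s
        = ∑' m : ℕ, (Complex.Gamma s * pochNewton n s) *
            (a m * (1 - ((m + 1 : ℕ) : ℂ)⁻¹) ^ n) := by
      intro n _
      rw [NewtonAux.inner_sum ha hg]
      calc (Complex.Gamma s * ∑' m : ℕ, a m * (1 - ((m + 1 : ℕ) : ℂ)⁻¹) ^ n) * pochNewton n s
          = (Complex.Gamma s * pochNewton n s) *
              ∑' m : ℕ, a m * (1 - ((m + 1 : ℕ) : ℂ)⁻¹) ^ n := by ring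
        _ = _ := tsum_mul_left.symm
    rw [Finset.sum_congr rfl step1,
      ← Summable.tsum_finsetSum (fun n _ => (hsum_tau n).mul_left (Complex.Gamma s * pochNewton n s)),
      ← tsum_mul_left]
    refine tsum_congr fun m => ?_
    simp only [Finset.mul_sum]
    exact Finset.sum_congr rfl fun n _ => by ring
  have hmain : Tendsto (fun N : ℕ => ∑' m : ℕ, a m *
        ∑ n ∈ Finset.range N, pochNewton n s * (1 - ((m + 1 : ℕ) : ℂ)⁻¹) ^ n) atTop
      (𝓝 (∑' m : ℕ, a m * ((m + 1 : ℕ) : ℂ) ^ (-s))) := by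
    apply tendsto_tsum_of_dominated_convergence (bound := fun m : ℕ => ‖a m‖ * B)
      (ha.mul_right B)
    · intro m
      exact (NewtonAux.binom_tendsto hB m).const_mul (a m)
    · refine Filter.Eventually.of_forall fun N m => ?_
      rw [norm_mul]
      have hsum : ‖∑ n ∈ Finset.range N, pochNewton n s * (1 - ((m + 1 : ℕ) : ℂ)⁻¹) ^ n‖
          ≤ B := by
        calc ‖∑ n ∈ Finset.range N, pochNewton n s * (1 - ((m + 1 : ℕ) : ℂ)⁻¹) ^ n‖
            ≤ ∑ n ∈ Finset.range N, ‖pochNewton n s * (1 - ((m + 1 : ℕ) : ℂ)⁻¹) ^ n‖ :=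
              norm_sum_le _ _
          _ ≤ ∑ n ∈ Finset.range N, ‖pochNewton n s‖ := by
              refine Finset.sum_le_sum fun n _ => ?_
              rw [norm_mul, norm_pow]
              nlinarith [norm_nonneg (pochNewton n s),
                pow_le_one₀ (norm_nonneg (1 - ((m + 1 : ℕ) : ℂ)⁻¹)) (hτ m) (n := n),
                pow_nonneg (norm_nonneg (1 - ((m + 1 : ℕ) : ℂ)⁻¹)) n]
          _ ≤ B := Summable.sum_le_tsum _ (fun n _ => norm_nonneg _) hB
      exact mul_le_mul_of_nonneg_left hsum (norm_nonneg _)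
  exact Tendsto.congr (fun N => (hswap N).symm) (hmain.const_mul (Complex.Gamma s))
end
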